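/- arXiv:1709.08311 — 3 statements merged into one kernel-verified Lean document; each statement's English description precedes it below -/
import Mathlib

section
/- Let A, B be types with Maltsev operations m_A, m_B, and let C ⊆ A × B be subdirect and closed under componentwise Maltsev application. Let α, β be the linkedness equivalence relations on A and B respectively. If C₁ ⊆ A is an α-equivalence class and C₂ ⊆ B is a β-equivalence class, and some a ∈ C₁, b ∈ C₂ satisfy (a,b) ∈ C, then C₁ × C₂ ⊆ C. -/
def IsMaltsev {A : Type*} (m : A → A → A → A) : Prop :=
  (∀ x y, m x x y = y) ∧ (∀ x y, m y x x = y)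

section MaltsevRelation

variable {A B : Type*}

def IsMaltsevClosed (mA : A → A → A → A) (mB : B → B → B → B) (C : Set (A × B)) : Prop :=
  ∀ p q r : A × B, p ∈ C → q ∈ C → r ∈ C → (mA p.1 q.1 r.1, mB p.2 q.2 r.2) ∈ C

def LinkedFst (C : Set (A × B)) (a a' : A) : Prop :=
  ∃ b, (a, b) ∈ C ∧ (a', b) ∈ C

def LinkedSnd (C : Set (A × B)) (b b' : B) : Prop :=
  ∃ a, (a, b) ∈ C ∧ (a, b') ∈ C

variable {mA : A → A → A → A} {mB : B → B → B → B} {C : Set (A × B)}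

theorem LinkedFst.symm {a a' : A} (h : LinkedFst C a a') : LinkedFst C a' a :=
  let ⟨b, hab, ha'b⟩ := h; ⟨b, ha'b, hab⟩

theorem LinkedSnd.symm {b b' : B} (h : LinkedSnd C b b') : LinkedSnd C b' b :=
  let ⟨a, hab, hab'⟩ := h; ⟨a, hab', hab⟩

/- Three corners of a rectangle in `C` give the fourth:
`m ((a', y), (a, y), (a, b)) = (m a' a a, m y y b) = (a', b)`. -/
theorem IsMaltsevClosed.mem_of_linkedFst (hA : IsMaltsev mA) (hB : IsMaltsev mB)
    (hC : IsMaltsevClosed mA mB C) {a a' : A} {b : B} (h : LinkedFst C a a') (hab : (a, b) ∈ C) :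
    (a', b) ∈ C := by
  obtain ⟨y, hay, ha'y⟩ := h
  simpa only [hA.2, hB.1] using hC _ _ _ ha'y hay hab

theorem IsMaltsevClosed.mem_of_linkedSnd (hA : IsMaltsev mA) (hB : IsMaltsev mB)
    (hC : IsMaltsevClosed mA mB C) {a : A} {b b' : B} (h : LinkedSnd C b b') (hab : (a, b) ∈ C) :
    (a, b') ∈ C := by
  obtain ⟨x, hxb, hxb'⟩ := h
  simpa only [hA.2, hB.1] using hC _ _ _ hab hxb hxb'

theorem IsMaltsevClosed.mem_iff_of_linkedFst (hA : IsMaltsev mA) (hB : IsMaltsev mB)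
    (hC : IsMaltsevClosed mA mB C) {a a' : A} {b : B} (h : LinkedFst C a a') :
    (a, b) ∈ C ↔ (a', b) ∈ C :=
  ⟨hC.mem_of_linkedFst hA hB h, hC.mem_of_linkedFst hA hB h.symm⟩

theorem IsMaltsevClosed.mem_iff_of_linkedSnd (hA : IsMaltsev mA) (hB : IsMaltsev mB)
    (hC : IsMaltsevClosed mA mB C) {a : A} {b b' : B} (h : LinkedSnd C b b') :
    (a, b) ∈ C ↔ (a, b') ∈ C :=
  ⟨hC.mem_of_linkedSnd hA hB h, hC.mem_of_linkedSnd hA hB h.symm⟩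

end MaltsevRelation

theorem stmt_5_general {A B : Type*} (mA : A → A → A → A) (mB : B → B → B → B)
    (hA : IsMaltsev mA) (hB : IsMaltsev mB) (C : Set (A × B))
    (hC : ∀ p q r : A × B, p ∈ C → q ∈ C → r ∈ C →
      (mA p.1 q.1 r.1, mB p.2 q.2 r.2) ∈ C)
    (C₁ : Set A) (C₂ : Set B)
    (hC₁ : ∃ a₀ : A, C₁ = {a' : A | ∃ b : B, (a₀, b) ∈ C ∧ (a', b) ∈ C})
    (hC₂ : ∃ b₀ : B, C₂ = {b' : B | ∃ a : A, (a, b₀) ∈ C ∧ (a, b') ∈ C})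
    (hconn : ∃ a ∈ C₁, ∃ b ∈ C₂, (a, b) ∈ C) :
    ∀ a ∈ C₁, ∀ b ∈ C₂, (a, b) ∈ C := by
  obtain ⟨a₀, rfl⟩ := hC₁
  obtain ⟨b₀, rfl⟩ := hC₂
  obtain ⟨a, ha : LinkedFst C a₀ a, b, hb : LinkedSnd C b₀ b, hab⟩ := hconn
  have hC : IsMaltsevClosed mA mB C := hC
  intro a' (ha' : LinkedFst C a₀ a') b' (hb' : LinkedSnd C b₀ b')
  have ha'b : (a', b) ∈ C :=
    (hC.mem_iff_of_linkedFst hA hB ha').mp ((hC.mem_iff_of_linkedFst hA hB ha).mpr hab)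
  exact (hC.mem_iff_of_linkedSnd hA hB hb').mp ((hC.mem_iff_of_linkedSnd hA hB hb).mpr ha'b)

theorem stmt_5 {A B : Type*} (mA : A → A → A → A) (mB : B → B → B → B)
    (hA : IsMaltsev mA) (hB : IsMaltsev mB) (C : Set (A × B))
    (hsub1 : ∀ a : A, ∃ b : B, (a, b) ∈ C) (hsub2 : ∀ b : B, ∃ a : A, (a, b) ∈ C)
    (hC : ∀ p q r : A × B, p ∈ C → q ∈ C → r ∈ C →
      (mA p.1 q.1 r.1, mB p.2 q.2 r.2) ∈ C)
    (C₁ : Set A) (C₂ : Set B)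
    (hC₁ : ∃ a₀ : A, C₁ = {a' : A | ∃ b : B, (a₀, b) ∈ C ∧ (a', b) ∈ C})
    (hC₂ : ∃ b₀ : B, C₂ = {b' : B | ∃ a : A, (a, b₀) ∈ C ∧ (a, b') ∈ C})
    (hconn : ∃ a ∈ C₁, ∃ b ∈ C₂, (a, b) ∈ C) :
    ∀ a ∈ C₁, ∀ b ∈ C₂, (a, b) ∈ C :=
  stmt_5_general mA mB hA hB C hC C₁ C₂ hC₁ hC₂ hconn
end

section
/- Let A, B be types with Maltsev operations, and C ⊆ A × B subdirect and closed under componentwise Maltsev application. If C is linked (the linkedness relation on A is the full relation), then C = A × B. -/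
/-!
If `(c, b) ∈ C` and `c` is linked to `d` through some `b'`, then the Maltsev term applied to
`(d, b'), (c, b'), (c, b)` gives `(d, b)`. So the fibre over every `b` is closed under linking,
and linkedness makes it all of `A`.
-/

section Linking

variable {A B : Type*} {mA : A → A → A → A} {mB : B → B → B → B} {C : Set (A × B)}

theorem mem_of_linked_of_mem (hA : ∀ x y, mA y x x = y) (hB : ∀ x y, mB x x y = y)
    (hC : ∀ p q r : A × B, p ∈ C → q ∈ C → r ∈ C → (mA p.1 q.1 r.1, mB p.2 q.2 r.2) ∈ C)
    {c d : A} {b b' : B} (hcb' : (c, b') ∈ C) (hdb' : (d, b') ∈ C) (hcb : (c, b) ∈ C) :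
    (d, b) ∈ C := by
  simpa only [hA, hB] using hC (d, b') (c, b') (c, b) hdb' hcb' hcb

theorem mem_of_reflTransGen_linked (hA : ∀ x y, mA y x x = y) (hB : ∀ x y, mB x x y = y)
    (hC : ∀ p q r : A × B, p ∈ C → q ∈ C → r ∈ C → (mA p.1 q.1 r.1, mB p.2 q.2 r.2) ∈ C)
    {a a' : A} {b : B}
    (hlink : Relation.ReflTransGen (fun x y : A => ∃ b : B, (x, b) ∈ C ∧ (y, b) ∈ C) a a')
    (hab : (a, b) ∈ C) : (a', b) ∈ C := by
  induction hlink with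
  | refl => exact hab
  | tail _ hstep ih =>
    obtain ⟨b', hcb', hdb'⟩ := hstep
    exact mem_of_linked_of_mem hA hB hC hcb' hdb' ih

end Linking

theorem stmt_6_general {A B : Type*} (mA : A → A → A → A) (mB : B → B → B → B)
    (hA : IsMaltsev mA) (hB : IsMaltsev mB) (C : Set (A × B))
    (hsub2 : ∀ b : B, ∃ a : A, (a, b) ∈ C)
    (hC : ∀ p q r : A × B, p ∈ C → q ∈ C → r ∈ C →
      (mA p.1 q.1 r.1, mB p.2 q.2 r.2) ∈ C)
    (hlinked : ∀ a a' : A,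
      Relation.ReflTransGen (fun x y : A => ∃ b : B, (x, b) ∈ C ∧ (y, b) ∈ C) a a') :
    C = Set.univ := by
  refine Set.eq_univ_of_forall fun ⟨a, b⟩ => ?_
  obtain ⟨a₀, ha₀⟩ := hsub2 b
  exact mem_of_reflTransGen_linked hA.2 hB.1 hC (hlinked a₀ a) ha₀

theorem stmt_6 {A B : Type*} (mA : A → A → A → A) (mB : B → B → B → B)
    (hA : IsMaltsev mA) (hB : IsMaltsev mB) (C : Set (A × B))
    (hsub1 : ∀ a : A, ∃ b : B, (a, b) ∈ C) (hsub2 : ∀ b : B, ∃ a : A, (a, b) ∈ C)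
    (hC : ∀ p q r : A × B, p ∈ C → q ∈ C → r ∈ C →
      (mA p.1 q.1 r.1, mB p.2 q.2 r.2) ∈ C)
    (hlinked : ∀ a a' : A,
      Relation.ReflTransGen (fun x y : A => ∃ b : B, (x, b) ∈ C ∧ (y, b) ∈ C) a a') :
    C = Set.univ :=
  stmt_6_general mA mB hA hB C hsub2 hC hlinked
end

section
/- Let A, B be finite types with Maltsev operations, and let C ⊆ A × B be subdirect and closed under componentwise Maltsev application. Suppose A admits no nontrivial proper equivalence relation compatible with its Maltsev operation (A is 'simple') and similarly for B. Then C is either the full product A × B or the graph of a bijection between A and B. -/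
section

variable {A B : Type*}

def IsCompatible (m : A → A → A → A) (θ : A → A → Prop) : Prop :=
  ∀ x x' y y' z z' : A, θ x x' → θ y y' → θ z z' → θ (m x y z) (m x' y' z')

def IsCompatibleRel (mA : A → A → A → A) (mB : B → B → B → B) (C : Set (A × B)) : Prop :=
  ∀ p q r : A × B, p ∈ C → q ∈ C → r ∈ C → (mA p.1 q.1 r.1, mB p.2 q.2 r.2) ∈ C

def Linked (C : Set (A × B)) (a a' : A) : Prop :=
  ∃ b, (a, b) ∈ C ∧ (a', b) ∈ C

variable {mA : A → A → A → A} {mB : B → B → B → B} {C : Set (A × B)}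

theorem IsCompatibleRel.preimage_swap (hC : IsCompatibleRel mA mB C) :
    IsCompatibleRel mB mA (Prod.swap ⁻¹' C) :=
  fun p q r hp hq hr => hC p.swap q.swap r.swap hp hq hr

theorem IsCompatibleRel.mem_of_rectangle (hA : IsMaltsev mA) (hB : IsMaltsev mB)
    (hC : IsCompatibleRel mA mB C) {a a' : A} {b b' : B}
    (h₁ : (a, b) ∈ C) (h₂ : (a', b) ∈ C) (h₃ : (a', b') ∈ C) : (a, b') ∈ C := by
  simpa only [hA.1, hB.2] using hC _ _ _ h₃ h₂ h₁

theorem IsCompatibleRel.linked_equivalence (hA : IsMaltsev mA) (hB : IsMaltsev mB)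
    (hC : IsCompatibleRel mA mB C) (hsub : ∀ a : A, ∃ b : B, (a, b) ∈ C) :
    Equivalence (Linked C) where
  refl a := let ⟨b, hb⟩ := hsub a; ⟨b, hb, hb⟩
  symm := fun ⟨b, h₁, h₂⟩ => ⟨b, h₂, h₁⟩
  trans := fun ⟨_, h₁, h₂⟩ ⟨b', h₃, h₄⟩ => ⟨b', hC.mem_of_rectangle hA hB h₁ h₂ h₃, h₄⟩

theorem IsCompatibleRel.linked_compatible (hC : IsCompatibleRel mA mB C) :
    IsCompatible mA (Linked C) :=
  fun x x' y y' z z' ⟨b₁, h₁, h₁'⟩ ⟨b₂, h₂, h₂'⟩ ⟨b₃, h₃, h₃'⟩ =>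
    ⟨mB b₁ b₂ b₃, hC (x, b₁) (y, b₂) (z, b₃) h₁ h₂ h₃, hC (x', b₁) (y', b₂) (z', b₃) h₁' h₂' h₃'⟩

theorem IsCompatibleRel.eq_univ_of_linked (hA : IsMaltsev mA) (hB : IsMaltsev mB)
    (hC : IsCompatibleRel mA mB C) (hsub : ∀ b : B, ∃ a : A, (a, b) ∈ C)
    (hlinked : ∀ a a' : A, Linked C a a') : C = Set.univ := by
  refine Set.eq_univ_of_forall fun ⟨a, b⟩ => ?_
  obtain ⟨a₀, h₀⟩ := hsub b
  obtain ⟨b₁, h₁, h₂⟩ := hlinked a a₀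
  exact hC.mem_of_rectangle hA hB h₁ h₂ h₀

theorem eq_graph_of_linked_swap_eq {f : A → B} (hf : ∀ a, (a, f a) ∈ C)
    (hlinked : ∀ b b' : B, Linked (Prod.swap ⁻¹' C) b b' → b = b') :
    C = {p : A × B | p.2 = f p.1} := by
  ext ⟨a, b⟩
  exact ⟨fun h => hlinked _ _ ⟨a, h, hf a⟩, fun (h : b = f a) => h ▸ hf a⟩

end

theorem stmt_14_general {A B : Type*}
    (mA : A → A → A → A) (mB : B → B → B → B)
    (hA : IsMaltsev mA) (hB : IsMaltsev mB) (C : Set (A × B))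
    (hsub1 : ∀ a : A, ∃ b : B, (a, b) ∈ C) (hsub2 : ∀ b : B, ∃ a : A, (a, b) ∈ C)
    (hC : ∀ p q r : A × B, p ∈ C → q ∈ C → r ∈ C →
      (mA p.1 q.1 r.1, mB p.2 q.2 r.2) ∈ C)
    (hAsimple : ∀ θ : A → A → Prop, Equivalence θ →
      (∀ x x' y y' z z' : A, θ x x' → θ y y' → θ z z' → θ (mA x y z) (mA x' y' z')) →
      (∀ a b : A, θ a b → a = b) ∨ (∀ a b : A, θ a b))
    (hBsimple : ∀ θ : B → B → Prop, Equivalence θ →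
      (∀ x x' y y' z z' : B, θ x x' → θ y y' → θ z z' → θ (mB x y z) (mB x' y' z')) →
      (∀ a b : B, θ a b → a = b) ∨ (∀ a b : B, θ a b)) :
    C = Set.univ ∨ ∃ f : A → B, Function.Bijective f ∧ C = {p : A × B | p.2 = f p.1} := by
  have hC : IsCompatibleRel mA mB C := hC
  have hC' := hC.preimage_swap
  rcases hAsimple _ (hC.linked_equivalence hA hB hsub1) hC.linked_compatible with hAeq | hAfull
  · rcases hBsimple _ (hC'.linked_equivalence hB hA hsub2) hC'.linked_compatible with
      hBeq | hBfull
    · choose f hf using hsub1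
      have hgraph := eq_graph_of_linked_swap_eq hf hBeq
      refine .inr ⟨f, ⟨fun a a' h => hAeq a a' ⟨f a, hf a, h ▸ hf a'⟩, fun b => ?_⟩, hgraph⟩
      obtain ⟨a, ha⟩ := hsub2 b
      rw [hgraph] at ha
      exact ⟨a, ha.symm⟩
    · have hswap := hC'.eq_univ_of_linked hB hA hsub1 hBfull
      exact .inl (Set.eq_univ_of_forall fun p => Set.eq_univ_iff_forall.1 hswap p.swap)
  · exact .inl (hC.eq_univ_of_linked hA hB hsub2 hAfull)

theorem stmt_14 {A B : Type*} [Finite A] [Finite B]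
    (mA : A → A → A → A) (mB : B → B → B → B)
    (hA : IsMaltsev mA) (hB : IsMaltsev mB) (C : Set (A × B))
    (hsub1 : ∀ a : A, ∃ b : B, (a, b) ∈ C) (hsub2 : ∀ b : B, ∃ a : A, (a, b) ∈ C)
    (hC : ∀ p q r : A × B, p ∈ C → q ∈ C → r ∈ C →
      (mA p.1 q.1 r.1, mB p.2 q.2 r.2) ∈ C)
    (hAsimple : ∀ θ : A → A → Prop, Equivalence θ →
      (∀ x x' y y' z z' : A, θ x x' → θ y y' → θ z z' → θ (mA x y z) (mA x' y' z')) →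
      (∀ a b : A, θ a b → a = b) ∨ (∀ a b : A, θ a b))
    (hBsimple : ∀ θ : B → B → Prop, Equivalence θ →
      (∀ x x' y y' z z' : B, θ x x' → θ y y' → θ z z' → θ (mB x y z) (mB x' y' z')) →
      (∀ a b : B, θ a b → a = b) ∨ (∀ a b : B, θ a b)) :
    C = Set.univ ∨ ∃ f : A → B, Function.Bijective f ∧ C = {p : A × B | p.2 = f p.1} :=
  stmt_14_general mA mB hA hB C hsub1 hsub2 hC hAsimple hBsimple
end
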